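/- (Policies are determined by their weighted occupancy measures.) In the finite MDP setting, let φ : ℕ → ℝ be a summable sequence with φ_t > 0 for all t, and for a policy π define the φ-weighted occupancy measure Φ_π((s,a)|s₀) = ∑_t φ_t · P^t_π((s,a)|s₀). Then: (i) for every policy π and all s₀, s, a: Φ_π((s,a)|s₀) = π s a · ∑_{a'} Φ_π((s,a')|s₀); (ii) if two policies π₁, π₂ satisfy Φ_{π₁}((s,a)|s₀) = Φ_{π₂}((s,a)|s₀) for all s₀, s, a, then π₁ s a = π₂ s a for all s, a. -/

import Mathlib

open scoped BigOperators Classical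

/-- `n`-step state–action distribution of the stationary policy `π` started at a state. -/
noncomputable def PstepS {S A : Type*} [Fintype S] [Fintype A]
    (P : S × A → PMF S) (π : S → PMF A) : ℕ → S → S × A → ℝ
  | 0, s₀, x => if x.1 = s₀ then (π x.1 x.2).toReal else 0
  | n + 1, s₀, x => ∑ y : S × A, PstepS P π n s₀ y * (P y x.1).toReal * (π x.1 x.2).toReal

/-- `n`-step state–action distribution of `π` started at a state–action pair. -/
noncomputable def PstepSA {S A : Type*} [Fintype S] [Fintype A]
    (P : S × A → PMF S) (π : S → PMF A) : ℕ → S × A → S × A → ℝ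
  | 0, y, x => if x = y then 1 else 0
  | n + 1, y, x => ∑ z : S × A, PstepSA P π n y z * (P z x.1).toReal * (π x.1 x.2).toReal

/-- η-weighted future state distribution, started at a state. -/
noncomputable def PetaS {S A : Type*} [Fintype S] [Fintype A]
    (P : S × A → PMF S) (π : S → PMF A) (η : ℕ → ℝ) (s₀ : S) (x : S × A) : ℝ :=
  ∑' k, η k * PstepS P π k s₀ x

/-- η-weighted future state distribution, started at a state–action pair. -/
noncomputable def PetaSA {S A : Type*} [Fintype S] [Fintype A]
    (P : S × A → PMF S) (π : S → PMF A) (η : ℕ → ℝ) (y : S × A) (x : S × A) : ℝ :=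
  ∑' k, η k * PstepSA P π k y x

/-- γ-discounted occupancy measure, started at a state. -/
noncomputable def rhoS {S A : Type*} [Fintype S] [Fintype A]
    (P : S × A → PMF S) (π : S → PMF A) (γ : ℝ) (s₀ : S) (x : S × A) : ℝ :=
  ∑' t, γ ^ t * PstepS P π t s₀ x

/-- γ-discounted occupancy measure, started at a state–action pair. -/
noncomputable def rhoSA {S A : Type*} [Fintype S] [Fintype A]
    (P : S × A → PMF S) (π : S → PMF A) (γ : ℝ) (y : S × A) (x : S × A) : ℝ :=
  ∑' t, γ ^ t * PstepSA P π t y x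

/-- η-weighted, γ-discounted future occupancy measure `μ_π`. -/
noncomputable def muS {S A : Type*} [Fintype S] [Fintype A]
    (P : S × A → PMF S) (π : S → PMF A) (γ : ℝ) (η : ℕ → ℝ) (s₀ : S) (x : S × A) : ℝ :=
  ∑' t, ∑' k, γ ^ t * η k * PstepS P π (t + k) s₀ x

/-- φ-weighted occupancy measure. -/
noncomputable def PhiOcc {S A : Type*} [Fintype S] [Fintype A]
    (P : S × A → PMF S) (π : S → PMF A) (φ : ℕ → ℝ) (s₀ : S) (x : S × A) : ℝ :=
  ∑' t, φ t * PstepS P π t s₀ x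

/-!
At every step the action is drawn from `π` at the current state, so
`P^t_π((s,a)|s₀) = π s a · ∑_{a'} P^t_π((s,a')|s₀)`. Since `0 ≤ P^t_π ≤ 1`, the series
defining `Φ_π` converge absolutely and this identity passes to `Φ_π`, which is (i).
Started at `s₀ = s`, the marginal `∑_{a'} Φ_π((s,a')|s)` is at least `φ 0 > 0`, so by (i)
`π s a` is the ratio of `Φ_π((s,a)|s)` to this marginal and is determined by `Φ_π`: this is (ii).
-/

theorem PMF.sum_toReal_eq_one {B : Type*} [Fintype B] (p : PMF B) :
    ∑ b, (p b).toReal = 1 := by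
  have h := p.tsum_coe
  rw [tsum_fintype] at h
  rw [← ENNReal.toReal_sum fun b _ => p.apply_ne_top b, h, ENNReal.toReal_one]

section
variable {S A : Type*} [Fintype S] [Fintype A] (P : S × A → PMF S) (π : S → PMF A)

lemma PstepS_nonneg (t : ℕ) (s₀ : S) (x : S × A) : 0 ≤ PstepS P π t s₀ x := by
  induction t generalizing x with
  | zero => simp only [PstepS]; split <;> positivity
  | succ n ih =>
    exact Finset.sum_nonneg fun y _ => by have := ih y; positivity

lemma sum_mul_transition_mul_policy (w : ℝ) (y : S × A) :
    ∑ x : S × A, w * (P y x.1).toReal * (π x.1 x.2).toReal = w := by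
  simp only [Fintype.sum_prod_type, mul_assoc, ← Finset.mul_sum, (π _).sum_toReal_eq_one,
    mul_one, (P y).sum_toReal_eq_one]

lemma sum_PstepS (t : ℕ) (s₀ : S) : ∑ x : S × A, PstepS P π t s₀ x = 1 := by
  induction t with
  | zero =>
    simp [PstepS, Fintype.sum_prod_type, (π s₀).sum_toReal_eq_one]
  | succ n ih =>
    simp only [PstepS]
    rw [Finset.sum_comm]
    simpa only [sum_mul_transition_mul_policy] using ih

lemma PstepS_le_one (t : ℕ) (s₀ : S) (x : S × A) : PstepS P π t s₀ x ≤ 1 :=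
  sum_PstepS P π t s₀ ▸
    Finset.single_le_sum (fun y _ => PstepS_nonneg P π t s₀ y) (Finset.mem_univ x)

lemma sum_PstepS_zero_self (s₀ : S) : ∑ a, PstepS P π 0 s₀ (s₀, a) = 1 := by
  simp [PstepS, (π s₀).sum_toReal_eq_one]

lemma PstepS_eq_mul_sum (t : ℕ) (s₀ s : S) (a : A) :
    PstepS P π t s₀ (s, a) = (π s a).toReal * ∑ a', PstepS P π t s₀ (s, a') := by
  cases t with
  | zero =>
    by_cases h : s = s₀
    · subst h
      simp [PstepS, (π s).sum_toReal_eq_one]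
    · simp [PstepS, h]
  | succ n =>
    have marginal : ∀ y : S × A,
        ∑ a', PstepS P π n s₀ y * (P y s).toReal * (π s a').toReal
          = PstepS P π n s₀ y * (P y s).toReal := fun y => by
      rw [← Finset.mul_sum, (π s).sum_toReal_eq_one, mul_one]
    simp only [PstepS]
    rw [Finset.sum_comm]
    simp only [marginal, Finset.mul_sum]
    exact Finset.sum_congr rfl fun y _ => by ring

variable {φ : ℕ → ℝ}

lemma summable_mul_PstepS (hφ : Summable φ) (s₀ : S) (x : S × A) :
    Summable fun t => φ t * PstepS P π t s₀ x :=
  hφ.norm.of_norm_bounded fun t => by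
    rw [norm_mul, Real.norm_of_nonneg (PstepS_nonneg P π t s₀ x)]
    exact mul_le_of_le_one_right (norm_nonneg _) (PstepS_le_one P π t s₀ x)

lemma sum_PhiOcc (hφ : Summable φ) (s₀ s : S) :
    ∑ a, PhiOcc P π φ s₀ (s, a) = ∑' t, φ t * ∑ a, PstepS P π t s₀ (s, a) := by
  simp only [PhiOcc, Finset.mul_sum]
  exact (Summable.tsum_finsetSum fun a _ => summable_mul_PstepS P π hφ s₀ (s, a)).symm

lemma PhiOcc_eq_mul_sum (hφ : Summable φ) (s₀ s : S) (a : A) :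
    PhiOcc P π φ s₀ (s, a) = (π s a).toReal * ∑ a', PhiOcc P π φ s₀ (s, a') := by
  rw [sum_PhiOcc P π hφ, ← tsum_mul_left, PhiOcc]
  exact tsum_congr fun t => by rw [PstepS_eq_mul_sum]; ring

lemma sum_PhiOcc_self_pos (hφs : Summable φ) (hφ : ∀ t, 0 ≤ φ t) (hφ₀ : 0 < φ 0) (s : S) :
    0 < ∑ a, PhiOcc P π φ s (s, a) :=
  hφ₀.trans_le <| calc
    φ 0 = ∑ a, φ 0 * PstepS P π 0 s (s, a) := by
      rw [← Finset.mul_sum, sum_PstepS_zero_self, mul_one]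
    _ ≤ ∑ a, PhiOcc P π φ s (s, a) := Finset.sum_le_sum fun a _ =>
      (summable_mul_PstepS P π hφs s (s, a)).le_tsum 0 fun t _ =>
        mul_nonneg (hφ t) (PstepS_nonneg P π t s (s, a))

end

lemma apply_eq_of_PhiOcc_self_eq {S A : Type*} [Fintype S] [Fintype A] {P : S × A → PMF S}
    {π₁ π₂ : S → PMF A} {φ : ℕ → ℝ} (hφs : Summable φ) (hφ : ∀ t, 0 ≤ φ t) (hφ₀ : 0 < φ 0)
    {s : S} (h : ∀ a, PhiOcc P π₁ φ s (s, a) = PhiOcc P π₂ φ s (s, a)) (a : A) :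
    π₁ s a = π₂ s a := by
  have hsum : ∑ a', PhiOcc P π₁ φ s (s, a') = ∑ a', PhiOcc P π₂ φ s (s, a') :=
    Finset.sum_congr rfl fun a' _ => h a'
  have hpos := sum_PhiOcc_self_pos P π₁ hφs hφ hφ₀ s
  have htoReal : (π₁ s a).toReal = (π₂ s a).toReal := by
    have h₁ := PhiOcc_eq_mul_sum P π₁ hφs s s a
    rw [h a, PhiOcc_eq_mul_sum P π₂ hφs s s a, ← hsum] at h₁
    exact (mul_right_cancel₀ hpos.ne' h₁).symm
  exact (ENNReal.toReal_eq_toReal_iff' (PMF.apply_ne_top _ _) (PMF.apply_ne_top _ _)).mp htoReal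

theorem stmt4_general {S A : Type*} [Fintype S] [Fintype A]
    (P : S × A → PMF S) (φ : ℕ → ℝ) (hφs : Summable φ) (hφ : ∀ t, 0 < φ t) :
    -- (i) the occupancy measure disintegrates through the policy
    (∀ (π : S → PMF A) (s₀ s : S) (a : A),
      PhiOcc P π φ s₀ (s, a) = (π s a).toReal * ∑ a' : A, PhiOcc P π φ s₀ (s, a')) ∧
    -- (ii) the occupancy measure determines the policy
    (∀ π₁ π₂ : S → PMF A,
      (∀ (s₀ s : S) (a : A), PhiOcc P π₁ φ s₀ (s, a) = PhiOcc P π₂ φ s₀ (s, a)) →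
      ∀ (s : S) (a : A), π₁ s a = π₂ s a) :=
  ⟨fun π => PhiOcc_eq_mul_sum P π hφs,
    fun _ _ h s => apply_eq_of_PhiOcc_self_eq hφs (fun t => (hφ t).le) (hφ 0) (h s s)⟩

theorem stmt4 {S A : Type*} [Fintype S] [Fintype A] [Nonempty S] [Nonempty A]
    (P : S × A → PMF S) (φ : ℕ → ℝ) (hφs : Summable φ) (hφ : ∀ t, 0 < φ t) :
    -- (i) the occupancy measure disintegrates through the policy
    (∀ (π : S → PMF A) (s₀ s : S) (a : A),
      PhiOcc P π φ s₀ (s, a) = (π s a).toReal * ∑ a' : A, PhiOcc P π φ s₀ (s, a')) ∧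
    -- (ii) the occupancy measure determines the policy
    (∀ π₁ π₂ : S → PMF A,
      (∀ (s₀ s : S) (a : A), PhiOcc P π₁ φ s₀ (s, a) = PhiOcc P π₂ φ s₀ (s, a)) →
      ∀ (s : S) (a : A), π₁ s a = π₂ s a) :=
  stmt4_general P φ hφs hφ
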